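/- Assume κ < 1. If u is admissible with u(0) = 0 and u'(0) = Ku, then ‖A³u‖_{L²} ≤ (1 − κ)^{−1/2} · ‖u''' − A³u‖_{L²}. -/

import Mathlib

open MeasureTheory Set

noncomputable section

/-- The `L²(ℝ₊;H)` norm of a function `v : ℝ → H` (restricted to `(0,∞)`):
`‖v‖_{L²} = (∫₀^∞ ‖v(t)‖² dt)^{1/2}`. -/
def L2norm {H : Type*} [NormedAddCommGroup H] (v : ℝ → H) : ℝ :=
  Real.sqrt (∫ t in Ioi (0 : ℝ), ‖v t‖ ^ 2)

/-- `A^γ`, the bounded operator obtained by applying the continuous functional calculus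
of `A` to the function `μ ↦ μ^γ`. -/
def Apow {H : Type*} [NormedAddCommGroup H] [InnerProductSpace ℂ H] [CompleteSpace H]
    (A : H →L[ℂ] H) (γ : ℝ) : H →L[ℂ] H :=
  cfc (fun μ : ℝ => μ ^ γ) A

/-- A function `u : ℝ → H`, thought of as defined on `[0,∞)`, is admissible (with
derivative witnesses `u'`, `u''`, `u'''`): `u` is twice continuously differentiable on
`[0,∞)`, `u''` is locally absolutely continuous with a.e. derivative `u'''` (expressed by
the fundamental theorem of calculus identity), and `u, u', u'', u'''` are all
square-integrable on `(0,∞)`. -/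
structure Admissible {H : Type*} [NormedAddCommGroup H] [InnerProductSpace ℂ H]
    (u u' u'' u''' : ℝ → H) : Prop where
  hasDeriv1 : ∀ t ∈ Ici (0 : ℝ), HasDerivWithinAt u (u' t) (Ici 0) t
  hasDeriv2 : ∀ t ∈ Ici (0 : ℝ), HasDerivWithinAt u' (u'' t) (Ici 0) t
  cont2 : ContinuousOn u'' (Ici 0)
  locInt3 : LocallyIntegrableOn u''' (Ici 0)
  fund : ∀ t ∈ Ici (0 : ℝ), u'' t = u'' 0 + ∫ s in Ioc (0 : ℝ) t, u''' s
  sq0 : MemLp u 2 (volume.restrict (Ioi 0))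
  sq1 : MemLp u' 2 (volume.restrict (Ioi 0))
  sq2 : MemLp u'' 2 (volume.restrict (Ioi 0))
  sq3 : MemLp u''' 2 (volume.restrict (Ioi 0))

/-- The norm `‖u‖_W = (‖u'''‖²_{L²} + ‖A³u‖²_{L²})^{1/2}`. -/
def Wnorm {H : Type*} [NormedAddCommGroup H] [InnerProductSpace ℂ H]
    (A : H →L[ℂ] H) (u u''' : ℝ → H) : ℝ :=
  Real.sqrt ((∫ t in Ioi (0 : ℝ), ‖u''' t‖ ^ 2) + ∫ t in Ioi (0 : ℝ), ‖(A ^ 3) (u t)‖ ^ 2)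

end

/-!
Write `B = A³`. Expanding the square,
`‖u''' - Bu‖² = ‖u'''‖² - 2 Re ⟪u''', Bu⟫ + ‖Bu‖²`. Integrating by parts twice, using `u 0 = 0`
and the self-adjointness of `B`, gives `∫₀^∞ Re ⟪u''', Bu⟫ = ½ ⟪u'(0), B u'(0)⟫ = ½ ‖A^{3/2} Ku‖²`;
the boundary terms at infinity vanish because they are integrable on `(0, ∞)` and have a limit.
Since `‖A^{3/2} Ku‖ ≤ κ ‖u‖_W`, this yields
`‖u''' - Bu‖²_{L²} ≥ (1 - κ²) ‖u‖²_W ≥ (1 - κ) ‖Bu‖²_{L²}`.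
Because `u''` is only absolutely continuous, the integration by parts is done by Fubini's theorem
on the triangle `{t < s}`.
-/

open Filter Topology
open scoped InnerProductSpace
open RCLike (re)

section Fubini

variable {𝕜 E : Type*} [RCLike 𝕜] [NormedAddCommGroup E] [InnerProductSpace 𝕜 E]
  {f g : ℝ → E} {a b : ℝ}

private lemma integrable_indicator_lt_inner (hf : IntegrableOn f (Ioc a b))
    (hg : IntegrableOn g (Ioc a b)) :
    Integrable ({p : ℝ × ℝ | p.1 < p.2}.indicator fun p => ⟪f p.1, g p.2⟫_𝕜)
      ((volume.restrict (Ioc a b)).prod (volume.restrict (Ioc a b))) := by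
  refine (hf.norm.mul_prod hg.norm).mono' ?_ (Eventually.of_forall fun p => ?_)
  · exact (hf.aestronglyMeasurable.comp_fst.inner hg.aestronglyMeasurable.comp_snd).indicator
      (measurableSet_lt measurable_fst measurable_snd)
  · exact (norm_indicator_le_norm_self _ _).trans (norm_inner_le_norm _ _)

variable [NormedSpace ℝ E] [CompleteSpace E]

theorem integral_inner_const {α : Type*} [MeasurableSpace α] {μ : Measure α} {f : α → E}
    (hf : Integrable f μ) (c : E) : ∫ x, ⟪f x, c⟫_𝕜 ∂μ = ⟪∫ x, f x ∂μ, c⟫_𝕜 := by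
  rw [← inner_conj_symm, ← integral_inner hf, ← integral_conj]
  simp only [inner_conj_symm]

private lemma integral_indicator_lt_inner_fst (hg : IntegrableOn g (Ioc a b)) {t : ℝ}
    (ht : t ∈ Ioc a b) :
    ∫ s, {p : ℝ × ℝ | p.1 < p.2}.indicator (fun p => ⟪f p.1, g p.2⟫_𝕜) (t, s)
      ∂(volume.restrict (Ioc a b)) = ⟪f t, ∫ s in Ioc t b, g s⟫_𝕜 := by
  have hslice : Ioi t ∩ Ioc a b = Ioc t b := by
    ext s
    simp only [mem_inter_iff, mem_Ioi, mem_Ioc]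
    exact ⟨fun h => ⟨h.1, h.2.2⟩, fun h => ⟨h.1, ht.1.trans h.1, h.2⟩⟩
  change ∫ s, (Ioi t).indicator (fun s => ⟪f t, g s⟫_𝕜) s ∂(volume.restrict (Ioc a b)) = _
  rw [integral_indicator measurableSet_Ioi, Measure.restrict_restrict measurableSet_Ioi, hslice,
    integral_inner (hg.mono_set (Ioc_subset_Ioc_left ht.1.le))]

private lemma integral_indicator_lt_inner_snd (hf : IntegrableOn f (Ioc a b)) {s : ℝ}
    (hs : s ∈ Ioc a b) :
    ∫ t, {p : ℝ × ℝ | p.1 < p.2}.indicator (fun p => ⟪f p.1, g p.2⟫_𝕜) (t, s)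
      ∂(volume.restrict (Ioc a b)) = ⟪∫ t in Ioc a s, f t, g s⟫_𝕜 := by
  have hslice : Iio s ∩ Ioc a b = Ioo a s := by
    ext t
    simp only [mem_inter_iff, mem_Iio, mem_Ioc, mem_Ioo]
    exact ⟨fun h => ⟨h.2.1, h.1⟩, fun h => ⟨h.2, h.1, h.2.le.trans hs.2⟩⟩
  change ∫ t, (Iio s).indicator (fun t => ⟪f t, g s⟫_𝕜) t ∂(volume.restrict (Ioc a b)) = _
  rw [integral_indicator measurableSet_Iio, Measure.restrict_restrict measurableSet_Iio, hslice,
    integral_inner_const (hf.mono_set (Ioo_subset_Ioc_self.trans (Ioc_subset_Ioc_right hs.2))),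
    integral_Ioc_eq_integral_Ioo]

theorem integrableOn_inner_setIntegral_Ioc (hf : IntegrableOn f (Ioc a b))
    (hg : IntegrableOn g (Ioc a b)) :
    IntegrableOn (fun t => ⟪f t, ∫ s in Ioc t b, g s⟫_𝕜) (Ioc a b) :=
  (integrable_indicator_lt_inner hf hg).integral_prod_left.congr <|
    (ae_restrict_mem measurableSet_Ioc).mono fun _ ht => integral_indicator_lt_inner_fst hg ht

theorem integrableOn_setIntegral_Ioc_inner (hf : IntegrableOn f (Ioc a b))
    (hg : IntegrableOn g (Ioc a b)) :
    IntegrableOn (fun s => ⟪∫ t in Ioc a s, f t, g s⟫_𝕜) (Ioc a b) :=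
  (integrable_indicator_lt_inner hf hg).integral_prod_right.congr <|
    (ae_restrict_mem measurableSet_Ioc).mono fun _ hs => integral_indicator_lt_inner_snd hf hs

theorem setIntegral_inner_setIntegral_Ioc_comm (hf : IntegrableOn f (Ioc a b))
    (hg : IntegrableOn g (Ioc a b)) :
    ∫ t in Ioc a b, ⟪f t, ∫ s in Ioc t b, g s⟫_𝕜
      = ∫ s in Ioc a b, ⟪∫ t in Ioc a s, f t, g s⟫_𝕜 := by
  rw [← setIntegral_congr_fun measurableSet_Ioc fun t ht => integral_indicator_lt_inner_fst hg ht,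
    ← setIntegral_congr_fun measurableSet_Ioc fun s hs => integral_indicator_lt_inner_snd hf hs]
  exact integral_integral_swap (integrable_indicator_lt_inner hf hg)

end Fubini

section IntegrationByParts

variable {𝕜 E : Type*} [RCLike 𝕜] [NormedAddCommGroup E] [InnerProductSpace 𝕜 E]
  [NormedSpace ℝ E] [CompleteSpace E] {a b : ℝ}

theorem integral_Ioc_deriv_inner_eq_sub {f f' g g' : ℝ → E} (hab : a ≤ b)
    (hf' : IntegrableOn f' (Ioc a b)) (hg' : IntegrableOn g' (Ioc a b))
    (hf : ∀ t ∈ Icc a b, f t = f a + ∫ s in Ioc a t, f' s)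
    (hg : ∀ t ∈ Icc a b, g t = g a + ∫ s in Ioc a t, g' s) :
    ∫ t in Ioc a b, ⟪f' t, g t⟫_𝕜
      = ⟪f b, g b⟫_𝕜 - ⟪f a, g a⟫_𝕜 - ∫ t in Ioc a b, ⟪f t, g' t⟫_𝕜 := by
  have hgb : g b = g a + ∫ s in Ioc a b, g' s := hg b ⟨hab, le_rfl⟩
  have hg_sub : ∀ t ∈ Ioc a b, g t = g b - ∫ s in Ioc t b, g' s := by
    intro t ht
    rw [hgb, hg t (Ioc_subset_Icc_self ht), ← Ioc_union_Ioc_eq_Ioc ht.1.le ht.2,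
      setIntegral_union (Ioc_disjoint_Ioc_of_le le_rfl) measurableSet_Ioc
        (hg'.mono_set (Ioc_subset_Ioc_right ht.2)) (hg'.mono_set (Ioc_subset_Ioc_left ht.1.le))]
    abel
  have hf_sub : ∀ s ∈ Icc a b, ∫ t in Ioc a s, f' t = f s - f a := fun s hs => by
    rw [hf s hs, add_sub_cancel_left]
  have hfg' : IntegrableOn (fun s => ⟪f s, g' s⟫_𝕜) (Ioc a b) := by
    refine ((integrableOn_setIntegral_Ioc_inner (𝕜 := 𝕜) hf' hg').add
      (hg'.const_inner (f a))).congr_fun (fun s hs => ?_) measurableSet_Ioc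
    rw [Pi.add_apply, hf_sub s (Ioc_subset_Icc_self hs), ← inner_add_left, sub_add_cancel]
  calc ∫ t in Ioc a b, ⟪f' t, g t⟫_𝕜
      = ∫ t in Ioc a b, (⟪f' t, g b⟫_𝕜 - ⟪f' t, ∫ s in Ioc t b, g' s⟫_𝕜) :=
        setIntegral_congr_fun measurableSet_Ioc fun t ht => by rw [hg_sub t ht, inner_sub_right]
    _ = ⟪∫ t in Ioc a b, f' t, g b⟫_𝕜 - ∫ s in Ioc a b, ⟪∫ t in Ioc a s, f' t, g' s⟫_𝕜 := by
        rw [integral_sub (hf'.inner_const _) (integrableOn_inner_setIntegral_Ioc (𝕜 := 𝕜) hf' hg'),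
          integral_inner_const hf', setIntegral_inner_setIntegral_Ioc_comm hf' hg']
    _ = ⟪f b - f a, g b⟫_𝕜 - ∫ s in Ioc a b, (⟪f s, g' s⟫_𝕜 - ⟪f a, g' s⟫_𝕜) := by
        rw [hf_sub b ⟨hab, le_rfl⟩]
        congr 1
        exact setIntegral_congr_fun measurableSet_Ioc fun s hs => by
          rw [hf_sub s (Ioc_subset_Icc_self hs), inner_sub_left]
    _ = ⟪f b, g b⟫_𝕜 - ⟪f a, g a⟫_𝕜 - ∫ t in Ioc a b, ⟪f t, g' t⟫_𝕜 := by
        rw [integral_sub hfg' (hg'.const_inner _), integral_inner hg', hgb]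
        simp only [inner_sub_left, inner_add_right]
        ring

end IntegrationByParts

theorem integral_Ioc_eq_sub_of_hasDerivWithinAt {E : Type*} [NormedAddCommGroup E]
    [NormedSpace ℝ E] [CompleteSpace E] {g g' : ℝ → E} {a b : ℝ} (hab : a ≤ b)
    (hd : ∀ t ∈ Icc a b, HasDerivWithinAt g (g' t) (Icc a b) t)
    (hg' : ContinuousOn g' (Icc a b)) :
    ∫ s in Ioc a b, g' s = g b - g a := by
  rw [← intervalIntegral.integral_of_le hab]
  exact intervalIntegral.integral_eq_sub_of_hasDeriv_right_of_le hab
    (fun t ht => (hd t ht).continuousWithinAt)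
    (fun t ht => ((hd t (Ioo_subset_Icc_self ht)).hasDerivAt
      (Icc_mem_nhds ht.1 ht.2)).hasDerivWithinAt)
    (hg'.intervalIntegrable_of_Icc hab)

section L2

variable {α 𝕜 E : Type*} [MeasurableSpace α] {μ : Measure α} [RCLike 𝕜] [NormedAddCommGroup E]
  [InnerProductSpace 𝕜 E] {f g : α → E}

theorem MeasureTheory.MemLp.integrable_inner (hf : MemLp f 2 μ) (hg : MemLp g 2 μ) :
    Integrable (fun x => ⟪f x, g x⟫_𝕜) μ := by
  refine (L2.integrable_inner (hf.toLp f) (hg.toLp g)).congr ?_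
  filter_upwards [hf.coeFn_toLp, hg.coeFn_toLp] with x hfx hgx
  rw [hfx, hgx]

theorem integral_norm_sub_sq (hf : MemLp f 2 μ) (hg : MemLp g 2 μ) :
    ∫ x, ‖f x - g x‖ ^ 2 ∂μ
      = ∫ x, ‖f x‖ ^ 2 ∂μ - 2 * ∫ x, re ⟪f x, g x⟫_𝕜 ∂μ + ∫ x, ‖g x‖ ^ 2 ∂μ := by
  have hf2 : Integrable (fun x => ‖f x‖ ^ 2) μ := hf.integrable_norm_pow two_ne_zero
  have hg2 : Integrable (fun x => ‖g x‖ ^ 2) μ := hg.integrable_norm_pow two_ne_zero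
  have hfg : Integrable (fun x => 2 * re ⟪f x, g x⟫_𝕜) μ :=
    (hf.integrable_inner hg).re.const_mul 2
  have hf2_sub : Integrable (fun x => ‖f x‖ ^ 2 - 2 * re ⟪f x, g x⟫_𝕜) μ := hf2.sub hfg
  simp_rw [norm_sub_sq (𝕜 := 𝕜)]
  rw [integral_add hf2_sub hg2, integral_sub hf2 hfg, integral_const_mul]

end L2

section Operator

variable {H : Type*} [NormedAddCommGroup H] [InnerProductSpace ℂ H] [CompleteSpace H]
  {A : H →L[ℂ] H}

theorem ContinuousLinearMap.nonneg_of_coercive (hA : IsSelfAdjoint A) {μ₀ : ℝ} (hμ₀ : 0 ≤ μ₀)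
    (hpos : ∀ x : H, μ₀ * ‖x‖ ^ 2 ≤ (⟪A x, x⟫_ℂ).re) : 0 ≤ A := by
  rw [ContinuousLinearMap.nonneg_iff_isPositive]
  refine ⟨hA.isSymmetric, fun x => ?_⟩
  rw [ContinuousLinearMap.reApplyInnerSelf_apply]
  exact (by positivity : 0 ≤ μ₀ * ‖x‖ ^ 2).trans (hpos x)

theorem apow_three_halves_mul_self (hA : 0 ≤ A) : Apow A (3 / 2) * Apow A (3 / 2) = A ^ 3 := by
  have hcont : Continuous fun μ : ℝ => μ ^ ((3 : ℝ) / 2) :=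
    Real.continuous_rpow_const (by norm_num)
  rw [Apow, ← cfc_mul _ _ A hcont.continuousOn hcont.continuousOn,
    ← cfc_pow_id (R := ℝ) A 3 (IsSelfAdjoint.of_nonneg hA)]
  refine cfc_congr fun μ hμ => ?_
  rw [← Real.rpow_add' (spectrum_nonneg_of_nonneg hA hμ) (by norm_num)]
  norm_num

theorem norm_apow_three_halves_apply_sq (hA : 0 ≤ A) (x : H) :
    ‖Apow A (3 / 2) x‖ ^ 2 = re ⟪x, (A ^ 3) x⟫_ℂ := by
  have hT : IsSelfAdjoint (Apow A (3 / 2)) := cfc_predicate (R := ℝ) _ A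
  rw [← apow_three_halves_mul_self hA, mul_apply_eq_comp,
    ← ContinuousLinearMap.adjoint_inner_left, hT.adjoint_eq, inner_self_eq_norm_sq]

end Operator

section Admissible

variable {H : Type*} [NormedAddCommGroup H] [InnerProductSpace ℂ H] [CompleteSpace H]
  {B : H →L[ℂ] H}

theorem HasDerivWithinAt.re_inner_apply_self (hB : IsSelfAdjoint B) {v : ℝ → H} {v' : H}
    {s : Set ℝ} {t : ℝ} (hv : HasDerivWithinAt v v' s t) :
    HasDerivWithinAt (fun τ => re ⟪v τ, B (v τ)⟫_ℂ) (2 * re ⟪v', B (v t)⟫_ℂ) s t := by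
  have hBv : HasDerivWithinAt (fun τ => B (v τ)) (B v') s t :=
    (B.restrictScalars ℝ).hasFDerivAt.comp_hasDerivWithinAt t hv
  have hsymm : re ⟪v t, B v'⟫_ℂ = re ⟪v', B (v t)⟫_ℂ := by
    rw [← ContinuousLinearMap.adjoint_inner_left, hB.adjoint_eq, inner_re_symm]
  rw [two_mul]
  nth_rewrite 1 [← hsymm]
  exact Complex.reCLM.hasFDerivAt.comp_hasDerivWithinAt t (hv.inner ℂ hBv)

variable {u u' u'' u''' : ℝ → H}

theorem Admissible.integral_Ioc_re_inner (hu : Admissible u u' u'' u''') (hB : IsSelfAdjoint B)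
    (h0 : u 0 = 0) {T : ℝ} (hT : 0 ≤ T) :
    ∫ t in Ioc 0 T, re ⟪u''' t, B (u t)⟫_ℂ
      = re ⟪u'' T, B (u T)⟫_ℂ - re ⟪u' T, B (u' T)⟫_ℂ / 2
        + re ⟪u' 0, B (u' 0)⟫_ℂ / 2 := by
  have hu' : ContinuousOn u' (Icc 0 T) := fun t ht =>
    ((hu.hasDeriv2 t ht.1).continuousWithinAt).mono Icc_subset_Ici_self
  have hBu' : ContinuousOn (fun t => B (u' t)) (Icc 0 T) := B.continuous.comp_continuousOn hu'
  have hu'''_int : IntegrableOn u''' (Ioc 0 T) :=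
    (hu.locInt3.integrableOn_compact_subset Icc_subset_Ici_self isCompact_Icc).mono_set
      Ioc_subset_Icc_self
  have hBu_deriv : ∀ s ∈ Ici (0 : ℝ), HasDerivWithinAt (fun t => B (u t)) (B (u' s)) (Ici 0) s :=
    fun s hs => (B.restrictScalars ℝ).hasFDerivAt.comp_hasDerivWithinAt s (hu.hasDeriv1 s hs)
  have hBu_prim : ∀ t ∈ Icc (0 : ℝ) T, B (u t) = B (u 0) + ∫ s in Ioc 0 t, B (u' s) := by
    intro t ht
    rw [integral_Ioc_eq_sub_of_hasDerivWithinAt ht.1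
      (fun s hs => (hBu_deriv s hs.1).mono Icc_subset_Ici_self)
      (hBu'.mono (Icc_subset_Icc_right ht.2)), add_sub_cancel]
  have hparts := integral_Ioc_deriv_inner_eq_sub (𝕜 := ℂ) hT hu'''_int
    (hBu'.integrableOn_Icc.mono_set Ioc_subset_Icc_self) (fun t ht => hu.fund t ht.1) hBu_prim
  have henergy := integral_Ioc_eq_sub_of_hasDerivWithinAt hT
    (fun t ht => ((hu.hasDeriv2 t ht.1).mono Icc_subset_Ici_self).re_inner_apply_self hB)
    (continuousOn_const.mul (RCLike.continuous_re.comp_continuousOn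
      ((hu.cont2.mono Icc_subset_Ici_self).inner hBu')))
  have hBu_L2 : MemLp (fun t => B (u t)) 2 (volume.restrict (Ioi 0)) := B.comp_memLp' hu.sq0
  have hint : IntegrableOn (fun t => ⟪u''' t, B (u t)⟫_ℂ) (Ioc 0 T) :=
    IntegrableOn.mono_set (hu.sq3.integrable_inner hBu_L2) Ioc_subset_Ioi_self
  have hint' : IntegrableOn (fun t => ⟪u'' t, B (u' t)⟫_ℂ) (Ioc 0 T) :=
    ((hu.cont2.mono Icc_subset_Ici_self).inner hBu').integrableOn_Icc.mono_set Ioc_subset_Icc_self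
  rw [integral_const_mul, integral_re hint'] at henergy
  rw [integral_re hint, hparts, h0, map_zero, inner_zero_right, sub_zero, map_sub]
  linarith

theorem Admissible.integral_Ioi_re_inner (hu : Admissible u u' u'' u''') (hB : IsSelfAdjoint B)
    (h0 : u 0 = 0) :
    ∫ t in Ioi 0, re ⟪u''' t, B (u t)⟫_ℂ = re ⟪u' 0, B (u' 0)⟫_ℂ / 2 := by
  set boundary : ℝ → ℝ := fun T => re ⟪u'' T, B (u T)⟫_ℂ - re ⟪u' T, B (u' T)⟫_ℂ / 2
  have hBu_L2 : MemLp (fun t => B (u t)) 2 (volume.restrict (Ioi 0)) := B.comp_memLp' hu.sq0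
  have hBu'_L2 : MemLp (fun t => B (u' t)) 2 (volume.restrict (Ioi 0)) := B.comp_memLp' hu.sq1
  have hint : IntegrableOn (fun t => re ⟪u''' t, B (u t)⟫_ℂ) (Ioi 0) :=
    (hu.sq3.integrable_inner hBu_L2).re
  have hboundary_int : IntegrableAtFilter boundary atTop :=
    ⟨Ioi 0, Ioi_mem_atTop 0, (hu.sq2.integrable_inner hBu_L2).re.sub
      ((hu.sq1.integrable_inner hBu'_L2).re.div_const 2)⟩
  have hboundary_lim : Tendsto boundary atTop (𝓝 ((∫ t in Ioi 0, re ⟪u''' t, B (u t)⟫_ℂ)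
      - re ⟪u' 0, B (u' 0)⟫_ℂ / 2)) := by
    refine ((intervalIntegral_tendsto_integral_Ioi 0 hint tendsto_id).sub_const _).congr' ?_
    filter_upwards [Ici_mem_atTop 0] with T hT
    rw [id, intervalIntegral.integral_of_le hT, hu.integral_Ioc_re_inner hB h0 hT]
    ring
  have hvol : ∀ s ∈ (atTop : Filter ℝ), volume s = ⊤ := fun s hs => by
    obtain ⟨a, ha⟩ := mem_atTop_sets.1 hs
    exact top_le_iff.1 (Real.volume_Ici (a := a) ▸ measure_mono ha)
  linarith [sub_eq_zero.1 (hboundary_int.eq_zero_of_tendsto hvol hboundary_lim)]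

end Admissible

theorem Real.sqrt_le_rpow_neg_half_mul_sqrt {x y c : ℝ} (hc : 0 < c) (h : c * x ≤ y) :
    √x ≤ c ^ (-(1 : ℝ) / 2) * √y := by
  rw [neg_div, Real.rpow_neg hc.le, ← Real.sqrt_eq_rpow, ← Real.sqrt_inv,
    ← Real.sqrt_mul (inv_nonneg.2 hc.le)]
  exact Real.sqrt_le_sqrt (by rw [inv_mul_eq_div, le_div_iff₀ hc]; linarith)

/-- Assume `κ < 1`. If `u` is admissible with `u(0) = 0` and `u'(0) = Ku`, then
`‖A³u‖_{L²} ≤ (1 − κ)^{−1/2} ‖u''' − A³u‖_{L²}`. -/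
theorem stmt_14 {H : Type*} [NormedAddCommGroup H] [InnerProductSpace ℂ H] [CompleteSpace H]
    (A : H →L[ℂ] H) (hA : IsSelfAdjoint A) (μ₀ : ℝ) (hμ₀ : 0 < μ₀)
    (hpos : ∀ x : H, μ₀ * ‖x‖ ^ 2 ≤ (inner ℂ (A x) x : ℂ).re)
    (K : (ℝ → H) →ₗ[ℂ] H) (κ : ℝ) (hκ0 : 0 ≤ κ)
    (hK : ∀ u u' u'' u''' : ℝ → H, Admissible u u' u'' u''' →
      ‖Apow A (3 / 2) (K u)‖ ≤ κ * Wnorm A u u''')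
    (hκ1 : κ < 1)
    (u u' u'' u''' : ℝ → H) (hu : Admissible u u' u'' u''')
    (h0 : u 0 = 0) (h1 : u' 0 = K u) :
    L2norm (fun t => (A ^ 3) (u t))
      ≤ (1 - κ) ^ (-(1 : ℝ) / 2) * L2norm (fun t => u''' t - (A ^ 3) (u t)) := by
  have hA0 : 0 ≤ A := ContinuousLinearMap.nonneg_of_coercive hA hμ₀.le hpos
  have hAu_L2 : MemLp (fun t => (A ^ 3) (u t)) 2 (volume.restrict (Ioi 0)) :=
    (A ^ 3).comp_memLp' hu.sq0
  have hexpand := integral_norm_sub_sq (𝕜 := ℂ) hu.sq3 hAu_L2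
  have hcross := hu.integral_Ioi_re_inner (hA.pow 3) h0
  have hI3 : 0 ≤ ∫ t in Ioi 0, ‖u''' t‖ ^ 2 := integral_nonneg fun _ => by positivity
  have hIA : 0 ≤ ∫ t in Ioi 0, ‖(A ^ 3) (u t)‖ ^ 2 := integral_nonneg fun _ => by positivity
  have hK_sq : re ⟪u' 0, (A ^ 3) (u' 0)⟫_ℂ
      ≤ κ ^ 2 * ((∫ t in Ioi 0, ‖u''' t‖ ^ 2) + ∫ t in Ioi 0, ‖(A ^ 3) (u t)‖ ^ 2) := by
    rw [← norm_apow_three_halves_apply_sq hA0, h1, ← Real.sq_sqrt (add_nonneg hI3 hIA), ← mul_pow]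
    exact pow_le_pow_left₀ (norm_nonneg _) (hK u u' u'' u''' hu) 2
  refine Real.sqrt_le_rpow_neg_half_mul_sqrt (sub_pos.2 hκ1) ?_
  beta_reduce
  rw [hexpand, hcross]
  have hκ : 0 ≤ κ * (1 - κ) := mul_nonneg hκ0 (sub_nonneg.2 hκ1.le)
  nlinarith [mul_nonneg hκ hIA, mul_nonneg hκ hI3]
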